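/- Let g be a Lie algebra, {δ_a} elements of an algebra A (graded-commutative, with Leibniz bracket {−,−} satisfying the right graded Leibniz rule and the identity {E,{G,H}} = {{E,G},H} − {{E,H},G} for g-degree-zero G,H) with {δ_a, δ_b} = C^c_{ab} δ_c. Define ϱ(ξ_a) on A ∧ Λ*(W) by (F ∧ 1)ϱ(ξ_a) := {F, δ_a} ∧ 1 and (F ∧ w_b)ϱ(ξ_a) := F ∧ C^c_{ba} w_c + {F, δ_a} ∧ w_b. Then ϱ is a right representation of g: ϱ([ξ_a, ξ_b]) = ϱ(ξ_a)ϱ(ξ_b) − ϱ(ξ_b)ϱ(ξ_a) (composition on the right). -/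

import Mathlib

/-!
On `F ∧ 1` the identity is `δ[ξ_a, ξ_b] = {δ_a, δ_b}` followed by the double-bracket identity.
On `F ∧ w_e` the two compositions produce the cross terms `{F, δ_a} ∧ C w` and `{F, δ_b} ∧ C w`
symmetrically, so they cancel in the commutator; what remains is the `F ∧ 1` case times `w_e`,
plus `F` times the Jacobi identity for the structure constants, read off in the basis `ξ`.
-/

open Finset

section StructureConstants

variable {R L ι : Type*} [CommRing R] [LieRing L] [LieAlgebra R L] [Fintype ι]
  (ξ : Module.Basis ι R L) (C : ι → ι → ι → R) (hC : ∀ a b, ⁅ξ a, ξ b⁆ = ∑ c, C a b c • ξ c)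
include hC

lemma Module.Basis.repr_lie_self_self (a b d : ι) : ξ.repr ⁅ξ a, ξ b⁆ d = C a b d := by
  classical
  simp [hC, Finsupp.single_apply]

lemma Module.Basis.repr_self_lie (e : ι) (x : L) (d : ι) :
    ξ.repr ⁅ξ e, x⁆ d = ∑ c, ξ.repr x c * C e c d := by
  conv_lhs => rw [← ξ.sum_repr x, lie_sum]
  simp [lie_smul, ξ.repr_lie_self_self C hC]

lemma Module.Basis.repr_lie_self (x : L) (b d : ι) :
    ξ.repr ⁅x, ξ b⁆ d = ∑ c, ξ.repr x c * C c b d := by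
  conv_lhs => rw [← ξ.sum_repr x, sum_lie]
  simp [smul_lie, ξ.repr_lie_self_self C hC]

lemma Module.Basis.structConst_jacobi (a b e d : ι) :
    ∑ c, C a b c * C e c d = ∑ c, C e a c * C c b d - ∑ c, C e b c * C c a d := by
  have h : ξ.repr ⁅ξ e, ⁅ξ a, ξ b⁆⁆ d = ξ.repr ⁅⁅ξ e, ξ a⁆, ξ b⁆ d - ξ.repr ⁅⁅ξ e, ξ b⁆, ξ a⁆ d := by
    rw [leibniz_lie, ← lie_skew (ξ a) ⁅ξ e, ξ b⁆]
    simp only [map_add, map_neg, Finsupp.add_apply, Finsupp.neg_apply, sub_eq_add_neg]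
  rw [ξ.repr_self_lie C hC e, ξ.repr_lie_self C hC _ b, ξ.repr_lie_self C hC _ a] at h
  simpa only [ξ.repr_lie_self_self C hC] using h

end StructureConstants

lemma sum_smul_sum_smul {R M ι : Type*} [CommRing R] [AddCommGroup M] [Module R M] [Fintype ι]
    (r : ι → R) (s : ι → ι → R) (v : ι → M) :
    ∑ c, r c • ∑ d, s c d • v d = ∑ d, (∑ c, r c * s c d) • v d := by
  simp_rw [smul_sum, smul_smul, sum_smul]
  exact sum_comm

lemma Module.Basis.structConst_jacobi_smul {R L ι M : Type*} [CommRing R] [LieRing L]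
    [LieAlgebra R L] [Fintype ι] [AddCommGroup M] [Module R M]
    (ξ : Module.Basis ι R L) (C : ι → ι → ι → R) (hC : ∀ a b, ⁅ξ a, ξ b⁆ = ∑ c, C a b c • ξ c)
    (v : ι → M) (a b e : ι) :
    ∑ c, C a b c • ∑ d, C e c d • v d
      = ∑ c, C e a c • ∑ d, C c b d • v d - ∑ c, C e b c • ∑ d, C c a d • v d := by
  simp_rw [sum_smul_sum_smul, ← sum_sub_distrib, ← sub_smul, ξ.structConst_jacobi C hC]

lemma mul_sum_smul {R B ι : Type*} [CommRing R] [Ring B] [Algebra R B] [Fintype ι]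
    (F : B) (r : ι → R) (v : ι → B) : F * ∑ c, r c • v c = ∑ c, r c • (F * v c) := by
  simp_rw [mul_sum, mul_smul_comm]

section RightAction

variable {R B ι : Type*} [CommRing R] [Ring B] [Algebra R B] [Fintype ι]
  {A : Set B} (w : ι → B) (P : B →ₗ[R] B →ₗ[R] B) (D : ι → B) (C : ι → ι → ι → R)
  (ϱ : ι → B →ₗ[R] B)
  (hϱ : ∀ a b, ∀ F ∈ A, ϱ a (F * w b) = F * ∑ c, C b a c • w c + P F (D a) * w b)
include hϱ

lemma rho_rho_mul (hPD : ∀ F ∈ A, ∀ a, P F (D a) ∈ A) {F : B} (hF : F ∈ A) (a b e : ι) :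
    ϱ b (ϱ a (F * w e))
      = F * ∑ c, C e a c • ∑ d, C c b d • w d + P F (D b) * ∑ c, C e a c • w c
        + P F (D a) * ∑ c, C e b c • w c + P (P F (D a)) (D b) * w e := by
  rw [hϱ a e F hF, map_add, hϱ b e _ (hPD F hF a), mul_sum_smul, map_sum]
  simp only [map_smul, hϱ b _ F hF, smul_add, sum_add_distrib, ← mul_sum_smul]
  abel

lemma sum_smul_rho_mul {F : B} (hF : F ∈ A) (a b e : ι) :
    ∑ c, C a b c • ϱ c (F * w e)
      = F * ∑ c, C a b c • ∑ d, C e c d • w d + (∑ c, C a b c • P F (D c)) * w e := by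
  simp only [hϱ _ e F hF, smul_add, sum_add_distrib, mul_sum_smul, sum_mul, smul_mul_assoc]

end RightAction

theorem rho_is_right_representation_general
    (m : ℕ)
    (g : Type*) [LieRing g] [LieAlgebra ℝ g]
    (ξ : Module.Basis (Fin m) ℝ g)
    (C : Fin m → Fin m → Fin m → ℝ)
    (hC : ∀ a b, ⁅ξ a, ξ b⁆ = ∑ c, C a b c • ξ c)
    (B : Type*) [Ring B] [Algebra ℝ B]
    (Asub : Subalgebra ℝ B)                    -- the algebra A, inside B
    (w : Fin m → B)                            -- the generators of Λ*(W)
    (P : B →ₗ[ℝ] B →ₗ[ℝ] B)                   -- the Leibniz bracket {-,-}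
    (δ : g →ₗ[ℝ] B)
    (hδhom : ∀ ζ η : g, δ ⁅ζ, η⁆ = P (δ ζ) (δ η))   -- δ[ξ,ζ] = {δξ, δζ}
    (hPmem : ∀ F ∈ Asub, ∀ ζ : g, P F (δ ζ) ∈ Asub)
    -- the double-bracket identity {E,{G,H}} = {{E,G},H} - {{E,H},G}
    -- (valid since the δ's have Leibniz degree 0)
    (hLem : ∀ F ∈ Asub, ∀ ζ η : g,
      P F (P (δ ζ) (δ η)) = P (P F (δ ζ)) (δ η) - P (P F (δ η)) (δ ζ))
    (ϱ : Fin m → B →ₗ[ℝ] B)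
    -- (F ∧ 1) ϱ(ξ_a) = {F, δ_a} ∧ 1
    (hϱ1 : ∀ a, ∀ F ∈ Asub, ϱ a F = P F (δ (ξ a)))
    -- (F ∧ w_b) ϱ(ξ_a) = F ∧ {w_b, w_a}^W + {F, δ_a} ∧ w_b
    (hϱ2 : ∀ a b, ∀ F ∈ Asub,
      ϱ a (F * w b) = F * (∑ c, C b a c • w c) + P F (δ (ξ a)) * w b) :
    -- ϱ([ξ_a, ξ_b]) = ϱ(ξ_a)ϱ(ξ_b) - ϱ(ξ_b)ϱ(ξ_a), composition on the right,
    -- checked on the generators F ∧ 1 and F ∧ w_e of A ∧ Λ*(W):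
    ∀ a b, ∀ F ∈ Asub,
      ((∑ c, C a b c • ϱ c F) = ϱ b (ϱ a F) - ϱ a (ϱ b F))
      ∧ ∀ e, (∑ c, C a b c • ϱ c (F * w e))
          = ϱ b (ϱ a (F * w e)) - ϱ a (ϱ b (F * w e)) := by
  intro a b F hF
  have hbracket : ∑ c, C a b c • P F (δ (ξ c))
      = P (P F (δ (ξ a))) (δ (ξ b)) - P (P F (δ (ξ b))) (δ (ξ a)) := by
    simp_rw [← hLem F hF, ← hδhom, hC, map_sum, map_smul]
  have hPD : ∀ F ∈ (Asub : Set B), ∀ c, P F (δ (ξ c)) ∈ Asub := fun F hF c => hPmem F hF (ξ c)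
  refine ⟨?_, fun e => ?_⟩
  · simp only [hϱ1 _ F hF, hϱ1 _ _ (hPD F hF _), hbracket]
  · rw [sum_smul_rho_mul w P _ C ϱ hϱ2 hF, ξ.structConst_jacobi_smul C hC, hbracket,
      rho_rho_mul w P _ C ϱ hϱ2 hPD hF, rho_rho_mul w P _ C ϱ hϱ2 hPD hF]
    rw [mul_sub, sub_mul]
    abel

/-- Let `g` be a Lie algebra with basis `{ξ_a}` and
structure constants `C` (`⁅ξ_a,ξ_b⁆ = C^c_{ab} ξ_c`), and let `A` be a
graded-commutative algebra (realised as a subalgebra `Asub` of an ambient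
algebra `B ⊇ A ∧ Λ*(W)`) carrying a Leibniz bracket `{-,-} = P` satisfying the
right graded Leibniz rule and the identity
`{E,{G,H}} = {{E,G},H} - {{E,H},G}` for `g`-degree-zero `G`, `H`.
Let `δ : g → A` be linear with `δ([ξ,ζ]) = {δ(ξ),δ(ζ)}` (so
`{δ_a, δ_b} = C^c_{ab} δ_c`), all `δ_a` of Leibniz degree `0`, and let `W` be
free on generators `w_a` with `{w_a,w_b}^W = C^c_{ab} w_c`.  Define `ϱ(ξ_a)` on
`A ∧ Λ*(W)` by `(F ∧ 1)ϱ(ξ_a) := {F,δ_a} ∧ 1` and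
`(F ∧ w_b)ϱ(ξ_a) := F ∧ {w_b,w_a}^W + {F,δ_a} ∧ w_b`.  Then `ϱ` is a right
representation of `g`:
`ϱ([ξ_a,ξ_b]) = ϱ(ξ_a)ϱ(ξ_b) - ϱ(ξ_b)ϱ(ξ_a)` (composition on the right). -/
theorem rho_is_right_representation
    (m : ℕ)
    (g : Type*) [LieRing g] [LieAlgebra ℝ g]
    (ξ : Module.Basis (Fin m) ℝ g)
    (C : Fin m → Fin m → Fin m → ℝ)
    (hC : ∀ a b, ⁅ξ a, ξ b⁆ = ∑ c, C a b c • ξ c)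
    (B : Type*) [Ring B] [Algebra ℝ B]
    (Asub : Subalgebra ℝ B)                    -- the algebra A, inside B
    (w : Fin m → B)                            -- the generators of Λ*(W)
    (P : B →ₗ[ℝ] B →ₗ[ℝ] B)                   -- the Leibniz bracket {-,-}
    (δ : g →ₗ[ℝ] B)
    (hδmem : ∀ ζ : g, δ ζ ∈ Asub)
    (hδhom : ∀ ζ η : g, δ ⁅ζ, η⁆ = P (δ ζ) (δ η))   -- δ[ξ,ζ] = {δξ, δζ}
    (hPmem : ∀ F ∈ Asub, ∀ ζ : g, P F (δ ζ) ∈ Asub)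
    -- the double-bracket identity {E,{G,H}} = {{E,G},H} - {{E,H},G}
    -- (valid since the δ's have Leibniz degree 0)
    (hLem : ∀ F ∈ Asub, ∀ ζ η : g,
      P F (P (δ ζ) (δ η)) = P (P F (δ ζ)) (δ η) - P (P F (δ η)) (δ ζ))
    (ϱ : Fin m → B →ₗ[ℝ] B)
    -- (F ∧ 1) ϱ(ξ_a) = {F, δ_a} ∧ 1
    (hϱ1 : ∀ a, ∀ F ∈ Asub, ϱ a F = P F (δ (ξ a)))
    -- (F ∧ w_b) ϱ(ξ_a) = F ∧ {w_b, w_a}^W + {F, δ_a} ∧ w_b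
    (hϱ2 : ∀ a b, ∀ F ∈ Asub,
      ϱ a (F * w b) = F * (∑ c, C b a c • w c) + P F (δ (ξ a)) * w b) :
    -- ϱ([ξ_a, ξ_b]) = ϱ(ξ_a)ϱ(ξ_b) - ϱ(ξ_b)ϱ(ξ_a), composition on the right,
    -- checked on the generators F ∧ 1 and F ∧ w_e of A ∧ Λ*(W):
    ∀ a b, ∀ F ∈ Asub,
      ((∑ c, C a b c • ϱ c F) = ϱ b (ϱ a F) - ϱ a (ϱ b F))
      ∧ ∀ e, (∑ c, C a b c • ϱ c (F * w e))
          = ϱ b (ϱ a (F * w e)) - ϱ a (ϱ b (F * w e)) :=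
  rho_is_right_representation_general m g ξ C hC B Asub w P δ hδhom hPmem hLem ϱ hϱ1 hϱ2
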